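/- Stein's lemma (achievability direction): for finite probability distributions P, Q on a finite set X with Q(x) > 0 whenever P(x) > 0, and any 0 < ε < 1, liminf_{n→∞} −(1/n) log β_ε(Pⁿ, Qⁿ) ≥ D(P‖Q). -/

import Mathlib

open Finset

/-- The set of achievable type-II error probabilities for stochastic tests
with type-I error at most `ε`. -/
def betaSet {X : Type*} [Fintype X] (P Q : X → ℝ) (ε : ℝ) : Set ℝ :=
  {b | ∃ T : X → ℝ, (∀ x, 0 ≤ T x ∧ T x ≤ 1) ∧ 1 - ε ≤ ∑ x, P x * T x ∧
    b = ∑ x, Q x * T x}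

/-- The optimal type-II error `β_ε(P,Q)`. -/
noncomputable def beta {X : Type*} [Fintype X] (P Q : X → ℝ) (ε : ℝ) : ℝ :=
  sInf (betaSet P Q ε)

/-- The `n`-fold i.i.d. product distribution. -/
def prodDist {X : Type*} [Fintype X] (P : X → ℝ) (n : ℕ) : (Fin n → X) → ℝ :=
  fun xs => ∏ i, P (xs i)

/-- Kullback-Leibler divergence (natural log), with the convention `0 log(0/0) = 0`. -/
noncomputable def klDiv {X : Type*} [Fintype X] (P Q : X → ℝ) : ℝ :=
  ∑ x, if P x = 0 then 0 else P x * Real.log (P x / Q x)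

/-! The likelihood-ratio test accepting where `Pⁿ ≥ e^{n(D-δ)} Qⁿ` has type-II error at most
`e^{-n(D-δ)}` by construction. Its type-I error is the probability that the empirical mean of
the i.i.d. log-likelihood ratios `log (P/Q)` falls `δ` below their mean `D = D(P‖Q)`, which
is `O(1/n)` by Chebyshev's inequality, hence `≤ ε` for large `n`. The trivial bound
`β ≥ (1-ε)/Cⁿ`, where `P ≤ C Q`, keeps the exponents bounded above, which the `liminf` on `ℝ`
needs in order to mean anything. -/

section Tests

variable {Y : Type*} [Fintype Y] {P Q : Y → ℝ} {ε : ℝ}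

lemma betaSet_nonempty (hP1 : ∑ y, P y = 1) (hε : 0 ≤ ε) : (betaSet P Q ε).Nonempty :=
  ⟨_, fun _ => 1, fun _ => ⟨zero_le_one, le_rfl⟩, by simp [hP1, hε], rfl⟩

lemma bddBelow_betaSet (hQ0 : ∀ y, 0 ≤ Q y) : BddBelow (betaSet P Q ε) := by
  refine ⟨0, ?_⟩
  rintro _ ⟨T, hT, -, rfl⟩
  exact sum_nonneg fun y _ => mul_nonneg (hQ0 y) (hT y).1

lemma div_le_beta {C : ℝ} (hPQ : ∀ y, P y ≤ C * Q y) (hC : 0 < C) (hP1 : ∑ y, P y = 1)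
    (hε : 0 ≤ ε) : (1 - ε) / C ≤ beta P Q ε := by
  refine le_csInf (betaSet_nonempty hP1 hε) ?_
  rintro _ ⟨T, hT, hTP, rfl⟩
  rw [div_le_iff₀' hC, mul_sum]
  exact hTP.trans <| sum_le_sum fun y _ => by
    rw [← mul_assoc]; exact mul_le_mul_of_nonneg_right (hPQ y) (hT y).1

/-- The likelihood-ratio test accepting where `c * Q ≤ P` has type-II error at most `c⁻¹`. -/
lemma beta_le_inv_of_sum_lt_le {c : ℝ} (hP0 : ∀ y, 0 ≤ P y) (hP1 : ∑ y, P y = 1)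
    (hQ0 : ∀ y, 0 ≤ Q y) (hc : 0 < c)
    (htail : ∑ y, (if P y < c * Q y then P y else 0) ≤ ε) : beta P Q ε ≤ c⁻¹ := by
  set T : Y → ℝ := fun y => if c * Q y ≤ P y then 1 else 0
  have hT : ∀ y, 0 ≤ T y ∧ T y ≤ 1 := fun y => by unfold T; split_ifs <;> norm_num
  have hPT : ∑ y, P y * T y = 1 - ∑ y, (if P y < c * Q y then P y else 0) := by
    rw [← hP1, ← sum_sub_distrib]
    refine sum_congr rfl fun y _ => ?_
    unfold T; split_ifs <;> linarith
  have hQT : ∀ y, Q y * T y ≤ c⁻¹ * (P y * T y) := fun y => by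
    unfold T; split_ifs with h
    · rw [mul_one, mul_one, le_inv_mul_iff₀ hc]; exact h
    · simp
  calc beta P Q ε ≤ ∑ y, Q y * T y :=
        csInf_le (bddBelow_betaSet hQ0) ⟨T, hT, by linarith, rfl⟩
    _ ≤ c⁻¹ * ∑ y, P y * T y := by rw [mul_sum]; exact sum_le_sum fun y _ => hQT y
    _ ≤ c⁻¹ * 1 := by
        gcongr
        calc ∑ y, P y * T y ≤ ∑ y, P y := sum_le_sum fun y _ =>
              mul_le_of_le_one_right (hP0 y) (hT y).2
          _ = 1 := hP1
    _ = c⁻¹ := mul_one _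

lemma sum_ite_le_abs_le_div_sq {w S : Y → ℝ} {a : ℝ} (hw : ∀ y, 0 ≤ w y) (ha : 0 < a) :
    ∑ y, (if a ≤ |S y| then w y else 0) ≤ (∑ y, w y * S y ^ 2) / a ^ 2 := by
  rw [sum_div]
  refine sum_le_sum fun y _ => ?_
  split_ifs with h
  · rw [le_div_iff₀ (by positivity)]
    exact mul_le_mul_of_nonneg_left (by simpa using pow_le_pow_left₀ ha.le h 2) (hw y)
  · exact div_nonneg (mul_nonneg (hw y) (sq_nonneg _)) (by positivity)

end Tests

section Product

variable {X : Type*} [Fintype X] {P Q : X → ℝ} {n : ℕ}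

lemma sum_prodDist_mul_prod (P : X → ℝ) (h : Fin n → X → ℝ) :
    ∑ xs, prodDist P n xs * ∏ i, h i (xs i) = ∏ i, ∑ x, P x * h i x := by
  simp only [prodDist, ← prod_mul_distrib]
  exact (Fintype.prod_sum fun i x => P x * h i x).symm

lemma sum_prodDist (P : X → ℝ) (n : ℕ) : ∑ xs, prodDist P n xs = (∑ x, P x) ^ n := by
  simpa using sum_prodDist_mul_prod P fun (_ : Fin n) _ => (1 : ℝ)

lemma prodDist_le_pow_mul {C : ℝ} (hP0 : ∀ x, 0 ≤ P x) (hPQ : ∀ x, P x ≤ C * Q x)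
    (xs : Fin n → X) : prodDist P n xs ≤ C ^ n * prodDist Q n xs := by
  calc prodDist P n xs ≤ ∏ i, C * Q (xs i) := prod_le_prod (fun i _ => hP0 _) fun i _ => hPQ _
    _ = C ^ n * prodDist Q n xs := by simp [prodDist, prod_mul_distrib]

lemma sum_prodDist_mul_apply_mul_apply (hP1 : ∑ x, P x = 1) (g h : X → ℝ) (i k : Fin n) :
    ∑ xs, prodDist P n xs * (g (xs i) * h (xs k)) =
      if i = k then ∑ x, P x * (g x * h x) else (∑ x, P x * g x) * ∑ x, P x * h x := by
  have hfactorize := sum_prodDist_mul_prod P fun j x =>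
    (if j = i then g x else 1) * (if j = k then h x else 1)
  simp only [prod_mul_distrib, prod_ite_eq', mem_univ, if_true] at hfactorize
  rw [hfactorize]
  split_ifs with hik
  · subst hik
    rw [Fintype.prod_eq_single i fun j hj => by simp [hj, hP1]]
    simp
  · have hfactor : ∀ j, ∑ x, P x * ((if j = i then g x else 1) * (if j = k then h x else 1)) =
        (if j = i then ∑ x, P x * g x else 1) * (if j = k then ∑ x, P x * h x else 1) := by
      intro j
      by_cases hji : j = i
      · subst hji; simp [hik]
      · by_cases hjk : j = k
        · subst hjk; simp [hji]
        · simp [hji, hjk, hP1]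
    simp only [hfactor, prod_mul_distrib, prod_ite_eq', mem_univ, if_true]

lemma sum_prodDist_mul_sum_sq (hP1 : ∑ x, P x = 1) {g : X → ℝ} (hg : ∑ x, P x * g x = 0) :
    ∑ xs, prodDist P n xs * (∑ i, g (xs i)) ^ 2 = n * ∑ x, P x * g x ^ 2 := by
  calc ∑ xs, prodDist P n xs * (∑ i, g (xs i)) ^ 2
      = ∑ i, ∑ k, ∑ xs, prodDist P n xs * (g (xs i) * g (xs k)) := by
        simp_rw [sq, sum_mul_sum, mul_sum]
        rw [sum_comm]
        exact sum_congr rfl fun i _ => sum_comm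
    _ = ∑ i : Fin n, ∑ k : Fin n, if i = k then ∑ x, P x * g x ^ 2 else 0 := by
        simp only [sum_prodDist_mul_apply_mul_apply hP1, hg, zero_mul, sq]
    _ = n * ∑ x, P x * g x ^ 2 := by simp

end Product

section LogLikelihood

open Real Filter

variable {X : Type*} [Fintype X] {P Q : X → ℝ} {n : ℕ}

lemma prodDist_nonneg (hP0 : ∀ x, 0 ≤ P x) (xs : Fin n → X) : 0 ≤ prodDist P n xs :=
  prod_nonneg fun i _ => hP0 (xs i)

lemma klDiv_eq_sum_mul_log (P Q : X → ℝ) : klDiv P Q = ∑ x, P x * log (P x / Q x) :=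
  sum_congr rfl fun x _ => by split_ifs with h <;> simp [h]

lemma exists_pos_forall_le_mul (hP0 : ∀ x, 0 ≤ P x) (hQ0 : ∀ x, 0 ≤ Q x)
    (habs : ∀ x, 0 < P x → 0 < Q x) : ∃ C > 0, ∀ x, P x ≤ C * Q x := by
  have hratio : ∀ x, 0 ≤ P x / Q x := fun x => div_nonneg (hP0 x) (hQ0 x)
  have hsum : 0 ≤ ∑ x, P x / Q x := sum_nonneg fun x _ => hratio x
  refine ⟨1 + ∑ x, P x / Q x, by linarith, fun x => ?_⟩
  rcases (hP0 x).eq_or_lt with hPx | hPx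
  · rw [← hPx]; exact mul_nonneg (by linarith) (hQ0 x)
  calc P x = P x / Q x * Q x := (div_mul_cancel₀ _ (habs x hPx).ne').symm
    _ ≤ (1 + ∑ x, P x / Q x) * Q x := by
        gcongr
        · exact hQ0 x
        · linarith [single_le_sum (fun y _ => hratio y) (mem_univ x)]

lemma prodDist_eq_mul_exp_sum_log (habs : ∀ x, 0 < P x → 0 < Q x) {xs : Fin n → X}
    (hxs : ∀ i, 0 < P (xs i)) :
    prodDist P n xs = prodDist Q n xs * exp (∑ i, log (P (xs i) / Q (xs i))) := by
  rw [exp_sum, prodDist, prodDist, ← prod_mul_distrib]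
  refine prod_congr rfl fun i _ => ?_
  rw [exp_log (div_pos (hxs i) (habs _ (hxs i))), mul_div_cancel₀ _ (habs _ (hxs i)).ne']

lemma sum_log_div_lt_of_prodDist_lt (hP0 : ∀ x, 0 ≤ P x) (habs : ∀ x, 0 < P x → 0 < Q x)
    {a : ℝ} {xs : Fin n → X} (hxs : 0 < prodDist P n xs)
    (hlt : prodDist P n xs < exp a * prodDist Q n xs) :
    ∑ i, log (P (xs i) / Q (xs i)) < a := by
  have hpos : ∀ i, 0 < P (xs i) := fun i =>
    (hP0 _).lt_of_ne' (prod_ne_zero_iff.mp hxs.ne' i (mem_univ i))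
  rw [prodDist_eq_mul_exp_sum_log habs hpos, mul_comm] at hlt hxs
  exact exp_lt_exp.mp (lt_of_mul_lt_mul_right hlt (pos_of_mul_pos_right hxs (exp_pos _).le).le)

/-- The type-I error of the threshold test, bounded by Chebyshev's inequality for the i.i.d.
log-likelihood ratios (the weak law of large numbers). -/
lemma sum_prodDist_lt_exp_mul_le (hP0 : ∀ x, 0 ≤ P x) (hP1 : ∑ x, P x = 1)
    (habs : ∀ x, 0 < P x → 0 < Q x) {δ : ℝ} (hδ : 0 < δ) (hn : 0 < n) :
    ∑ xs, (if prodDist P n xs < exp (n * (klDiv P Q - δ)) * prodDist Q n xs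
      then prodDist P n xs else 0) ≤
      (∑ x, P x * (log (P x / Q x) - klDiv P Q) ^ 2) / δ ^ 2 / n := by
  set g : X → ℝ := fun x => log (P x / Q x) - klDiv P Q
  have hg : ∑ x, P x * g x = 0 := by
    simp only [g, mul_sub, sum_sub_distrib, ← sum_mul, hP1, one_mul, klDiv_eq_sum_mul_log, sub_self]
  have hn' : (0 : ℝ) < n := Nat.cast_pos.mpr hn
  have hdev : ∀ xs, (if prodDist P n xs < exp (n * (klDiv P Q - δ)) * prodDist Q n xs
      then prodDist P n xs else 0) ≤ if n * δ ≤ |∑ i, g (xs i)| then prodDist P n xs else 0 := by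
    intro xs
    split_ifs with hlt hfar
    · exact le_rfl
    · rcases (prodDist_nonneg hP0 xs).eq_or_lt with hzero | hxs
      · exact hzero.symm.le
      have hllr := sum_log_div_lt_of_prodDist_lt hP0 habs hxs hlt
      simp only [g, sum_sub_distrib, sum_const, card_univ, Fintype.card_fin, nsmul_eq_mul] at hfar
      exact absurd (le_abs.mpr (Or.inr (by linarith))) hfar
    · exact prodDist_nonneg hP0 xs
    · exact le_rfl
  calc _ ≤ ∑ xs, (if n * δ ≤ |∑ i, g (xs i)| then prodDist P n xs else 0) :=
        sum_le_sum fun xs _ => hdev xs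
    _ ≤ (∑ xs, prodDist P n xs * (∑ i, g (xs i)) ^ 2) / (n * δ) ^ 2 :=
        sum_ite_le_abs_le_div_sq (prodDist_nonneg hP0) (by positivity)
    _ = (∑ x, P x * g x ^ 2) / δ ^ 2 / n := by
        rw [sum_prodDist_mul_sum_sq hP1 hg]
        field_simp

lemma eventually_beta_prodDist_le_exp (hP0 : ∀ x, 0 ≤ P x) (hP1 : ∑ x, P x = 1)
    (hQ0 : ∀ x, 0 ≤ Q x) (habs : ∀ x, 0 < P x → 0 < Q x) {ε δ : ℝ} (hε : 0 < ε)
    (hδ : 0 < δ) :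
    ∀ᶠ n : ℕ in atTop, beta (prodDist P n) (prodDist Q n) ε ≤ exp (-(n * (klDiv P Q - δ))) := by
  have hvanish := tendsto_const_div_atTop_nhds_zero_nat
    ((∑ x, P x * (log (P x / Q x) - klDiv P Q) ^ 2) / δ ^ 2)
  filter_upwards [hvanish.eventually (gt_mem_nhds hε), eventually_gt_atTop 0] with n hsmall hn
  rw [exp_neg]
  exact beta_le_inv_of_sum_lt_le (prodDist_nonneg hP0) (by rw [sum_prodDist, hP1, one_pow])
    (prodDist_nonneg hQ0) (exp_pos _)
    ((sum_prodDist_lt_exp_mul_le hP0 hP1 habs hδ hn).trans hsmall.le)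

end LogLikelihood

section Rates

open Real

variable {n : ℕ} {b : ℝ}

lemma le_neg_one_div_mul_log_of_le_exp {a : ℝ} (hn : 0 < n) (hb : 0 < b)
    (h : b ≤ exp (-(n * a))) : a ≤ -(1 / n) * log b := by
  have hn' : (0 : ℝ) < n := Nat.cast_pos.mpr hn
  have hlog : log b ≤ -(n * a) := (log_le_iff_le_exp hb).mpr h
  rw [neg_mul, le_neg, one_div, inv_mul_le_iff₀ hn']
  linarith

lemma neg_one_div_mul_log_le_of_div_pow_le {c C : ℝ} (hn : 1 ≤ n) (hc0 : 0 < c) (hc1 : c ≤ 1)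
    (hC : 0 < C) (h : c / C ^ n ≤ b) : -(1 / n) * log b ≤ log C - log c := by
  have hn' : (1 : ℝ) ≤ n := Nat.one_le_cast.mpr hn
  have hlog : log c - n * log C ≤ log b := by
    simpa [log_div hc0.ne' (pow_ne_zero n hC.ne'), log_pow] using
      log_le_log (div_pos hc0 (pow_pos hC n)) h
  have hlogc : log c ≤ 0 := log_nonpos hc0.le hc1
  rw [neg_mul, neg_le, one_div, le_inv_mul_iff₀ (by linarith)]
  nlinarith

end Rates

theorem stein_achievability_general {X : Type*} [Fintype X] (P Q : X → ℝ)
    (hP0 : ∀ x, 0 ≤ P x) (hP1 : ∑ x, P x = 1)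
    (hQ0 : ∀ x, 0 ≤ Q x)
    (habs : ∀ x, 0 < P x → 0 < Q x)
    {ε : ℝ} (hε0 : 0 < ε) (hε1 : ε < 1) :
    Filter.liminf
      (fun n : ℕ => -(1 / (n : ℝ)) * Real.log (beta (prodDist P n) (prodDist Q n) ε))
      Filter.atTop ≥ klDiv P Q := by
  obtain ⟨C, hC, hPQ⟩ := exists_pos_forall_le_mul hP0 hQ0 habs
  have hlower (n : ℕ) : (1 - ε) / C ^ n ≤ beta (prodDist P n) (prodDist Q n) ε :=
    div_le_beta (prodDist_le_pow_mul hP0 hPQ) (pow_pos hC n)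
      (by rw [sum_prodDist, hP1, one_pow]) hε0.le
  have hcobdd : Filter.IsCoboundedUnder (· ≥ ·) Filter.atTop
      (fun n : ℕ => -(1 / (n : ℝ)) * Real.log (beta (prodDist P n) (prodDist Q n) ε)) :=
    Filter.isBoundedUnder_of_eventually_le ((Filter.eventually_ge_atTop 1).mono fun n hn =>
      neg_one_div_mul_log_le_of_div_pow_le hn (by linarith) (by linarith) hC (hlower n))
      |>.isCoboundedUnder_ge
  refine le_of_forall_pos_le_add fun δ hδ => ?_
  have hrate := Filter.le_liminf_of_le hcobdd <|
    ((eventually_beta_prodDist_le_exp hP0 hP1 hQ0 habs hε0 hδ).and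
      (Filter.eventually_gt_atTop 0)).mono fun n ⟨hupper, hn⟩ =>
        le_neg_one_div_mul_log_of_le_exp hn
          ((div_pos (by linarith) (pow_pos hC n)).trans_le (hlower n)) hupper
  linarith

/-- Stein's lemma, achievability direction:
`liminf_n -(1/n) log β_ε(Pⁿ, Qⁿ) ≤ D(P‖Q)`. -/
theorem stein_achievability {X : Type*} [Fintype X] (P Q : X → ℝ)
    (hP0 : ∀ x, 0 ≤ P x) (hP1 : ∑ x, P x = 1)
    (hQ0 : ∀ x, 0 ≤ Q x) (hQ1 : ∑ x, Q x = 1)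
    (habs : ∀ x, 0 < P x → 0 < Q x)
    {ε : ℝ} (hε0 : 0 < ε) (hε1 : ε < 1) :
    Filter.liminf
      (fun n : ℕ => -(1 / (n : ℝ)) * Real.log (beta (prodDist P n) (prodDist Q n) ε))
      Filter.atTop ≥ klDiv P Q :=
  stein_achievability_general P Q hP0 hP1 hQ0 habs hε0 hε1
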